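/- arXiv:1802.06835 — 4 statements merged into one kernel-verified Lean document; each statement's English description precedes it below -/
import Mathlib

section
/- Let D ⊆ ℝ^n be an open convex set and φ : D → ℝ be differentiable and strictly convex, and define the Bregman divergence B_φ(u,v) = φ(u) − φ(v) − ⟨∇φ(v), u − v⟩. Let p_1, …, p_m ≥ 0 be weights with Σ_{j=1}^m p_j = 1, let x_1, …, x_m ∈ D, and let z ∈ D satisfy ∇φ(z) = Σ_{j=1}^m p_j ∇φ(x_j). Then for all u, v ∈ D, Σ_{j=1}^m p_j B_φ(u, x_j) − Σ_{j=1}^m p_j B_φ(v, x_j) = B_φ(u, z) − B_φ(v, z); in particular the functions u ↦ Σ_j p_j B_φ(u, x_j) and u ↦ B_φ(u, z) differ by a constant on D and have the same minimizers over any subset of D. -/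
open scoped RealInnerProductSpace BigOperators

/-- The Bregman divergence `B_φ(u,v) = φ(u) − φ(v) − ⟨∇φ(v), u − v⟩`. -/
noncomputable def breg {n : ℕ} (φ : EuclideanSpace ℝ (Fin n) → ℝ)
    (u v : EuclideanSpace ℝ (Fin n)) : ℝ :=
  φ u - φ v - ⟪gradient φ v, u - v⟫

/-- If `∇φ(z) = Σ_j p_j ∇φ(x_j)` (mirror averaging), then
`u ↦ Σ_j p_j B_φ(u, x_j)` and `u ↦ B_φ(u, z)` differ by a constant on `D`,
hence have the same minimizers over any subset of `D`. -/
theorem mirror_averaging_equiv {n m : ℕ}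
    (D : Set (EuclideanSpace ℝ (Fin n))) (hDopen : IsOpen D) (hDconv : Convex ℝ D)
    (φ : EuclideanSpace ℝ (Fin n) → ℝ)
    (hφdiff : ∀ x ∈ D, DifferentiableAt ℝ φ x)
    (hφconv : StrictConvexOn ℝ D φ)
    (p : Fin m → ℝ) (hp : ∀ j, 0 ≤ p j) (hpsum : ∑ j, p j = 1)
    (x : Fin m → EuclideanSpace ℝ (Fin n)) (hx : ∀ j, x j ∈ D)
    (z : EuclideanSpace ℝ (Fin n)) (hz : z ∈ D)
    (hzgrad : gradient φ z = ∑ j, p j • gradient φ (x j)) :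
    (∀ u ∈ D, ∀ v ∈ D,
      (∑ j, p j * breg φ u (x j)) - (∑ j, p j * breg φ v (x j)) =
        breg φ u z - breg φ v z) ∧
    (∃ c : ℝ, ∀ u ∈ D, ∑ j, p j * breg φ u (x j) = breg φ u z + c) ∧
    (∀ S ⊆ D, ∀ y ∈ S,
      ((∀ u ∈ S, ∑ j, p j * breg φ y (x j) ≤ ∑ j, p j * breg φ u (x j)) ↔
        (∀ u ∈ S, breg φ y z ≤ breg φ u z))) := by
  have key : ∀ u, ∑ j, p j * breg φ u (x j)
      = breg φ u z + ∑ j, p j * breg φ z (x j) := by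
    intro u
    have h1 : ∑ j, p j * φ u = φ u := by
      rw [← Finset.sum_mul, hpsum, one_mul]
    have h2 : ∑ j, p j * φ z = φ z := by
      rw [← Finset.sum_mul, hpsum, one_mul]
    simp only [breg, hzgrad, sum_inner, real_inner_smul_left, inner_sub_right,
      mul_sub, Finset.sum_sub_distrib, h1, h2]
    ring
  refine ⟨fun u _ v _ => by rw [key u, key v]; ring,
    ⟨∑ j, p j * breg φ z (x j), fun u _ => key u⟩, fun S _ y _ => ?_⟩
  constructor
  · intro h u hu
    have := h u hu
    rw [key y, key u] at this
    linarith
  · intro h u hu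
    rw [key y, key u]
    linarith [h u hu]
end

section
/- Let P ∈ ℝ^{m×m} be symmetric and stochastic (nonnegative entries with each row summing to 1), let 𝒳 ⊆ ℝ^n be convex, and let φ : ℝ^n → ℝ be differentiable and convex with Bregman divergence B_φ. Let x_1, …, x_m ∈ 𝒳 and y_1, …, y_m ∈ 𝒳 be such that for every i, the first-order optimality condition holds: for all u ∈ 𝒳, Σ_{j=1}^m P_{ij} ⟨∇φ(y_i) − ∇φ(x_j), u − y_i⟩ ≥ 0 (this holds in particular when y_i minimizes u ↦ Σ_j P_{ij} B_φ(u, x_j) over 𝒳). Then for every u ∈ 𝒳, Σ_{i=1}^m B_φ(u, x_i) − Σ_{i=1}^m B_φ(u, y_i) ≥ Σ_{i=1}^m Σ_{j=1}^m P_{ij} B_φ(y_i, x_j). -/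
open scoped RealInnerProductSpace BigOperators

lemma breg_three {n : ℕ} (φ : EuclideanSpace ℝ (Fin n) → ℝ)
    (u y x : EuclideanSpace ℝ (Fin n)) :
    breg φ u x - breg φ u y - breg φ y x
      = ⟪gradient φ y - gradient φ x, u - y⟫ := by
  simp only [breg, inner_sub_left, inner_sub_right]
  ring

/-- Key Pythagorean-type lemma for mirror averaging (Lemma 2 of the paper). -/
theorem mirror_averaging_pythagorean {n m : ℕ}
    (P : Matrix (Fin m) (Fin m) ℝ) (hPsym : P.IsSymm)
    (hPnn : ∀ i j, 0 ≤ P i j) (hProw : ∀ i, ∑ j, P i j = 1)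
    (𝒳 : Set (EuclideanSpace ℝ (Fin n))) (hX : Convex ℝ 𝒳)
    (φ : EuclideanSpace ℝ (Fin n) → ℝ)
    (hφd : Differentiable ℝ φ) (hφc : ConvexOn ℝ Set.univ φ)
    (x y : Fin m → EuclideanSpace ℝ (Fin n))
    (hx : ∀ i, x i ∈ 𝒳) (hy : ∀ i, y i ∈ 𝒳)
    (hopt : ∀ i, ∀ u ∈ 𝒳,
      0 ≤ ∑ j, P i j * ⟪gradient φ (y i) - gradient φ (x j), u - y i⟫) :
    ∀ u ∈ 𝒳,
      (∑ i, breg φ u (x i)) - (∑ i, breg φ u (y i)) ≥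
        ∑ i, ∑ j, P i j * breg φ (y i) (x j) := by
  intro u hu
  have hcol : ∀ j, ∑ i, P i j = 1 := by
    intro j
    have : ∀ i, P i j = P j i := fun i => (hPsym.apply j i)
    simp_rw [this]
    exact hProw j
  have h1 : (∑ i, breg φ u (x i)) = ∑ i, ∑ j, P i j * breg φ u (x j) := by
    rw [Finset.sum_comm]
    simp_rw [← Finset.sum_mul, hcol, one_mul]
  have h2 : (∑ i, breg φ u (y i)) = ∑ i, ∑ j, P i j * breg φ u (y i) := by
    simp_rw [← Finset.sum_mul, hProw, one_mul]
  have key : 0 ≤ ∑ i, ∑ j, P i j *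
      (breg φ u (x j) - breg φ u (y i) - breg φ (y i) (x j)) := by
    apply Finset.sum_nonneg
    intro i _
    have := hopt i u hu
    simp_rw [breg_three]
    exact this
  have expand : (∑ i, ∑ j, P i j *
      (breg φ u (x j) - breg φ u (y i) - breg φ (y i) (x j)))
      = (∑ i, ∑ j, P i j * breg φ u (x j))
        - (∑ i, ∑ j, P i j * breg φ u (y i))
        - (∑ i, ∑ j, P i j * breg φ (y i) (x j)) := by
    simp_rw [mul_sub, Finset.sum_sub_distrib]
  rw [ge_iff_le, ← sub_nonneg, h1, h2]
  linarith [key, expand.symm.le, expand.le]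
end

section
/- Let P ∈ ℝ^{m×m} be symmetric, stochastic (nonnegative entries, each row summing to 1) and positive semidefinite, let p ≥ 1, and set σ = min{1, n^{2/p − 1}}. Then for all block vectors u = (u_1, …, u_m) and v = (v_1, …, v_m) with u_i, v_i ∈ ℝ^n, Σ_{i=1}^m ‖u_i − Σ_{j=1}^m P_{ij} u_j‖_2^2 ≤ (1/σ) Σ_{i=1}^m Σ_{j=1}^m P_{ij} ‖v_i − u_j‖_p^2, where ‖w‖_p = (Σ_{k=1}^n |w_k|^p)^{1/p}. -/
/-!
Expanding the squares, the right-hand side with Euclidean norms in place of ℓ_p norms exceeds the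
left-hand side by `Σ_i ‖v_i − (Pu)_i‖² + 2 Σ_i ⟪u_i, ((P − P²)u)_i⟫`. A symmetric doubly stochastic
matrix satisfies `P ≤ 1` in the Loewner order, so `P (1 − P)`, a product of commuting positive
semidefinite matrices, is positive semidefinite and the excess is nonnegative. Finally `σ ‖w‖₂² ≤ ‖w‖_p²`: for `p ≤ 2` by
superadditivity of `t ↦ t^(2/p)`, and for `p ≥ 2` by the power mean inequality with exponent `p/2`.
-/

open scoped RealInnerProductSpace BigOperators

/-- The ℓ_p norm on ℝ^n: `‖w‖_p = (Σ_k |w_k|^p)^(1/p)`. -/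
noncomputable def lpnorm {n : ℕ} (p : ℝ) (w : EuclideanSpace ℝ (Fin n)) : ℝ :=
  (∑ k, |w k| ^ p) ^ (1 / p)

open Matrix Finset
open scoped MatrixOrder

namespace Real

theorem sum_rpow_le_rpow_sum {ι : Type*} (s : Finset ι) {f : ι → ℝ} (hf : ∀ i ∈ s, 0 ≤ f i)
    {t : ℝ} (ht : 1 ≤ t) : ∑ i ∈ s, f i ^ t ≤ (∑ i ∈ s, f i) ^ t := by
  classical
  induction s using Finset.induction_on with
  | empty => simp [zero_rpow (zero_lt_one.trans_le ht).ne']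
  | insert a s ha ih =>
    have hs : ∀ i ∈ s, 0 ≤ f i := fun i hi => hf i (mem_insert_of_mem hi)
    rw [sum_insert ha, sum_insert ha]
    calc f a ^ t + ∑ i ∈ s, f i ^ t ≤ f a ^ t + (∑ i ∈ s, f i) ^ t := by gcongr; exact ih hs
      _ ≤ _ := add_rpow_le_rpow_add (hf a (mem_insert_self a s)) (sum_nonneg hs) ht

end Real

section LpNorm

variable {n : ℕ}

theorem EuclideanSpace.norm_sq_eq_sum_abs_rpow_two {ι : Type*} [Fintype ι]
    (w : EuclideanSpace ℝ ι) :
    ‖w‖ ^ 2 = ∑ k, |w k| ^ (2 : ℝ) := by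
  simp [EuclideanSpace.real_norm_sq_eq]

theorem lpnorm_sq (p : ℝ) (w : EuclideanSpace ℝ (Fin n)) :
    lpnorm p w ^ 2 = (∑ k, |w k| ^ p) ^ (2 / p) := by
  rw [lpnorm, ← Real.rpow_natCast, ← Real.rpow_mul (sum_nonneg fun k _ => by positivity)]
  congr 1
  push_cast
  ring

theorem norm_sq_le_lpnorm_sq {p : ℝ} (hp : 0 < p) (hp2 : p ≤ 2) (w : EuclideanSpace ℝ (Fin n)) :
    ‖w‖ ^ 2 ≤ lpnorm p w ^ 2 := by
  have h : ∀ k, |w k| ^ (2 : ℝ) = (|w k| ^ p) ^ (2 / p) := fun k => by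
    rw [← Real.rpow_mul (abs_nonneg _), mul_div_cancel₀ _ hp.ne']
  rw [EuclideanSpace.norm_sq_eq_sum_abs_rpow_two, lpnorm_sq p, sum_congr rfl fun k _ => h k]
  exact Real.sum_rpow_le_rpow_sum _ (fun k _ => by positivity) ((one_le_div hp).2 hp2)

theorem norm_sq_le_card_rpow_mul_lpnorm_sq {p : ℝ} (hp : 2 ≤ p) (w : EuclideanSpace ℝ (Fin n)) :
    ‖w‖ ^ 2 ≤ (n : ℝ) ^ (1 - 2 / p) * lpnorm p w ^ 2 := by
  have hp0 : 0 < p := by linarith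
  have hmean := Real.rpow_sum_le_const_mul_sum_rpow_of_nonneg (s := univ)
    (f := fun k => |w k| ^ (2 : ℝ)) (p := p / 2) (by linarith) (fun k _ => by positivity)
  have h2 : 2 * (p / 2) = p := by ring
  simp only [card_univ, Fintype.card_fin, ← Real.rpow_mul (abs_nonneg _), h2] at hmean
  have h := Real.rpow_le_rpow (by positivity) hmean (by positivity : 0 ≤ 2 / p)
  rw [← Real.rpow_mul (by positivity), Real.mul_rpow (by positivity) (by positivity),
    ← Real.rpow_mul (Nat.cast_nonneg n), show p / 2 * (2 / p) = 1 by field_simp, Real.rpow_one,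
    show (p / 2 - 1) * (2 / p) = 1 - 2 / p by field_simp] at h
  rwa [EuclideanSpace.norm_sq_eq_sum_abs_rpow_two, lpnorm_sq p]

theorem norm_sq_le_inv_mul_lpnorm_sq {p : ℝ} (hp : 0 < p) (w : EuclideanSpace ℝ (Fin n)) :
    ‖w‖ ^ 2 ≤ (min 1 ((n : ℝ) ^ (2 / p - 1)))⁻¹ * lpnorm p w ^ 2 := by
  rcases Nat.eq_zero_or_pos n with rfl | hn
  · calc ‖w‖ ^ 2 = 0 := by simp [Subsingleton.elim w 0]
      _ ≤ _ := by positivity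
  set σ := min 1 ((n : ℝ) ^ (2 / p - 1))
  have hσ : 0 < σ := lt_min one_pos (by positivity)
  rcases le_total p 2 with hp2 | hp2
  · calc ‖w‖ ^ 2 ≤ lpnorm p w ^ 2 := norm_sq_le_lpnorm_sq hp hp2 w
      _ ≤ σ⁻¹ * lpnorm p w ^ 2 :=
        le_mul_of_one_le_left (sq_nonneg _) ((one_le_inv₀ hσ).2 (min_le_left _ _))
  · calc ‖w‖ ^ 2 ≤ (n : ℝ) ^ (1 - 2 / p) * lpnorm p w ^ 2 :=
          norm_sq_le_card_rpow_mul_lpnorm_sq hp2 w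
      _ ≤ σ⁻¹ * lpnorm p w ^ 2 := by
        gcongr
        rw [← neg_sub, Real.rpow_neg (Nat.cast_nonneg n)]
        exact inv_anti₀ hσ (min_le_right _ _)

end LpNorm

section DoublyStochastic

variable {R ι : Type*} [Semiring R] [PartialOrder R] [IsOrderedRing R] [Fintype ι] [DecidableEq ι]
  {P : Matrix ι ι R}

theorem Matrix.sum_sum_mul_left_of_mem_doublyStochastic (hP : P ∈ doublyStochastic R ι)
    (f : ι → R) : ∑ i, ∑ j, P i j * f i = ∑ i, f i := by
  simp_rw [← sum_mul, sum_row_of_mem_doublyStochastic hP, one_mul]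

theorem Matrix.sum_sum_mul_right_of_mem_doublyStochastic (hP : P ∈ doublyStochastic R ι)
    (f : ι → R) : ∑ i, ∑ j, P i j * f j = ∑ j, f j := by
  rw [sum_comm]
  simp_rw [← sum_mul, sum_col_of_mem_doublyStochastic hP, one_mul]

end DoublyStochastic

section Consensus

variable {ι E : Type*} [Fintype ι] [NormedAddCommGroup E] [InnerProductSpace ℝ E]

theorem Matrix.posSemidef_one_sub_of_mem_doublyStochastic [DecidableEq ι] {P : Matrix ι ι ℝ}
    (hP : P ∈ doublyStochastic ℝ ι) (hPh : P.IsHermitian) : (1 - P).PosSemidef := by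
  refine .of_dotProduct_mulVec_nonneg (isHermitian_one.sub hPh) fun x => ?_
  have hamgm : 2 * ∑ i, ∑ j, x i * (P i j * x j) ≤
      ∑ i, ∑ j, P i j * x i ^ 2 + ∑ i, ∑ j, P i j * x j ^ 2 := by
    simp only [mul_sum, ← sum_add_distrib]
    gcongr with i _ j _
    nlinarith [mul_nonneg (nonneg_of_mem_doublyStochastic hP (i := i) (j := j))
      (sq_nonneg (x i - x j))]
  rw [sum_sum_mul_left_of_mem_doublyStochastic hP (x · ^ 2),
    sum_sum_mul_right_of_mem_doublyStochastic hP (x · ^ 2)] at hamgm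
  rw [star_trivial, sub_mulVec, one_mulVec, dotProduct_sub, sub_nonneg]
  simp only [dotProduct, mulVec, mul_sum, ← sq]
  linarith

theorem Matrix.sum_inner_sum_transpose_mul_self_smul {κ : Type*} [Fintype κ] (A : Matrix κ ι ℝ)
    (x : ι → E) :
    ∑ i, ⟪x i, ∑ j, (Aᵀ * A) i j • x j⟫ = ∑ k, ‖∑ j, A k j • x j‖ ^ 2 := by
  have h : ∀ i, ∑ j, (Aᵀ * A) i j • x j = ∑ k, A k i • ∑ j, A k j • x j := fun i => by
    simp only [mul_apply, transpose_apply, sum_smul, smul_sum, mul_smul]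
    exact sum_comm
  simp_rw [h, inner_sum, real_inner_smul_right]
  rw [sum_comm]
  simp_rw [← real_inner_smul_left, ← sum_inner, real_inner_self_eq_norm_sq]

theorem Matrix.PosSemidef.sum_inner_sum_smul_nonneg [DecidableEq ι] {Q : Matrix ι ι ℝ}
    (hQ : Q.PosSemidef) (x : ι → E) : 0 ≤ ∑ i, ⟪x i, ∑ j, Q i j • x j⟫ := by
  obtain ⟨B, rfl⟩ := CStarAlgebra.nonneg_iff_eq_star_mul_self.mp hQ.nonneg
  rw [star_eq_conjTranspose, conjTranspose_eq_transpose_of_trivial,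
    sum_inner_sum_transpose_mul_self_smul]
  positivity

theorem Matrix.PosSemidef.sum_norm_sum_smul_sq_le [DecidableEq ι] {P : Matrix ι ι ℝ}
    (hP : P.PosSemidef) (h1P : (1 - P).PosSemidef) (x : ι → E) :
    ∑ i, ‖∑ j, P i j • x j‖ ^ 2 ≤ ∑ i, ⟪x i, ∑ j, P i j • x j⟫ := by
  have hsymm : Pᵀ = P := by rw [← conjTranspose_eq_transpose_of_trivial]; exact hP.isHermitian
  have hQ : (P - Pᵀ * P).PosSemidef := by
    rw [hsymm, ← nonneg_iff_posSemidef]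
    simpa [mul_sub] using Commute.mul_nonneg hP.nonneg h1P.nonneg
      ((Commute.one_right P).sub_right (Commute.refl P))
  have := hQ.sum_inner_sum_smul_nonneg x
  simp only [sub_apply, sub_smul, sum_sub_distrib, inner_sub_right,
    sum_inner_sum_transpose_mul_self_smul] at this
  linarith

theorem Matrix.sum_norm_sub_sum_smul_sq_le [DecidableEq ι] {P : Matrix ι ι ℝ}
    (hP : P ∈ doublyStochastic ℝ ι) (hPpsd : P.PosSemidef) (x y : ι → E) :
    ∑ i, ‖x i - ∑ j, P i j • x j‖ ^ 2 ≤ ∑ i, ∑ j, P i j * ‖y i - x j‖ ^ 2 := by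
  set g := fun i => ∑ j, P i j • x j with hg
  have hquad : ∑ i, ‖g i‖ ^ 2 ≤ ∑ i, ⟪x i, g i⟫ :=
    hPpsd.sum_norm_sum_smul_sq_le (posSemidef_one_sub_of_mem_doublyStochastic hP hPpsd.1) x
  have hrhs : ∑ i, ∑ j, P i j * ‖y i - x j‖ ^ 2 =
      ∑ i, ‖y i‖ ^ 2 - 2 * ∑ i, ⟪y i, g i⟫ + ∑ i, ‖x i‖ ^ 2 := by
    have hcross : ∑ i, ⟪y i, g i⟫ = ∑ i, ∑ j, P i j * ⟪y i, x j⟫ := by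
      simp only [hg, inner_sum, real_inner_smul_right]
    rw [hcross, ← sum_sum_mul_left_of_mem_doublyStochastic hP (‖y ·‖ ^ 2),
      ← sum_sum_mul_right_of_mem_doublyStochastic hP (‖x ·‖ ^ 2), mul_sum]
    simp only [norm_sub_sq_real, mul_sum, ← sum_sub_distrib, ← sum_add_distrib]
    exact sum_congr rfl fun i _ => sum_congr rfl fun j _ => by ring
  have hlhs : ∑ i, ‖x i - g i‖ ^ 2 = ∑ i, ‖x i‖ ^ 2 - 2 * ∑ i, ⟪x i, g i⟫ + ∑ i, ‖g i‖ ^ 2 := by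
    simp only [norm_sub_sq_real, sum_add_distrib, sum_sub_distrib, mul_sum]
  have hsq : 0 ≤ ∑ i, ‖y i‖ ^ 2 - 2 * ∑ i, ⟪y i, g i⟫ + ∑ i, ‖g i‖ ^ 2 := by
    simp only [mul_sum, ← sum_sub_distrib, ← sum_add_distrib, ← norm_sub_sq_real]
    positivity
  linarith

end Consensus

/-- Lemma 3 of the paper: the consensus residual is bounded by the weighted
dispersion measured in the ℓ_p norm. -/
theorem residual_le_variance {m n : ℕ}
    (P : Matrix (Fin m) (Fin m) ℝ) (hPsym : P.IsSymm)
    (hPnn : ∀ i j, 0 ≤ P i j) (hProw : ∀ i, ∑ j, P i j = 1)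
    (hPpsd : P.PosSemidef)
    (p : ℝ) (hp : 1 ≤ p)
    (σ : ℝ) (hσ : σ = min 1 ((n : ℝ) ^ (2 / p - 1)))
    (u v : Fin m → EuclideanSpace ℝ (Fin n)) :
    ∑ i, ‖u i - ∑ j, P i j • u j‖ ^ 2 ≤
      (1 / σ) * ∑ i, ∑ j, P i j * lpnorm p (v i - u j) ^ 2 := by
  have hP : P ∈ doublyStochastic ℝ (Fin m) :=
    mem_doublyStochastic_iff_sum.2 ⟨hPnn, hProw, fun j => by simpa [hPsym.apply] using hProw j⟩
  calc ∑ i, ‖u i - ∑ j, P i j • u j‖ ^ 2 ≤ ∑ i, ∑ j, P i j * ‖v i - u j‖ ^ 2 :=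
        sum_norm_sub_sum_smul_sq_le hP hPpsd u v
    _ ≤ ∑ i, ∑ j, P i j * (σ⁻¹ * lpnorm p (v i - u j) ^ 2) := by
        gcongr with i _ j _
        · exact hPnn i j
        · exact hσ ▸ norm_sq_le_inv_mul_lpnorm_sq (by linarith) _
    _ = (1 / σ) * ∑ i, ∑ j, P i j * lpnorm p (v i - u j) ^ 2 := by
        simp only [one_div, mul_sum, mul_left_comm]
end

section
/- Let 𝒳 ⊆ ℝ^n be convex, f_1, …, f_m : ℝ^n → ℝ, and P ∈ ℝ^{m×m} symmetric and stochastic. Let x*_1, …, x*_m ∈ 𝒳 satisfy the consensus condition Σ_{j=1}^m P_{ij} x*_j = x*_i for all i, and let ν*_1, …, ν*_m ∈ ℝ^n. Assume for each i there exists g_i ∈ ℝ^n with ⟨g_i, x*_i − v⟩ ≥ 0 for all v ∈ 𝒳 (g_i is in the normal cone of 𝒳 at x*_i), such that for all v ∈ ℝ^n, f_i(v) ≥ f_i(x*_i) + ⟨−ν*_i + Σ_{j=1}^m P_{ij} ν*_j − g_i, v − x*_i⟩. Then for every x_1, …, x_m ∈ 𝒳, Σ_{i=1}^m f_i(x*_i)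 − Σ_{i=1}^m f_i(x_i) ≤ Σ_{i=1}^m ⟨ν*_i, x_i − Σ_{j=1}^m P_{ij} x_j⟩. -/
open scoped RealInnerProductSpace BigOperators

/-- KKT-based bound on the Lagrangian duality gap (inequality (18) of the
paper): at a KKT primal-dual pair the objective suboptimality of any feasible
point is bounded by the consensus residual weighted by the dual variables. -/
theorem kkt_duality_gap_bound {n m : ℕ}
    (𝒳 : Set (EuclideanSpace ℝ (Fin n))) (hX : Convex ℝ 𝒳)
    (f : Fin m → EuclideanSpace ℝ (Fin n) → ℝ)
    (P : Matrix (Fin m) (Fin m) ℝ) (hPsym : P.IsSymm)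
    (hPnn : ∀ i j, 0 ≤ P i j) (hProw : ∀ i, ∑ j, P i j = 1)
    (xs : Fin m → EuclideanSpace ℝ (Fin n)) (hxs : ∀ i, xs i ∈ 𝒳)
    (hcons : ∀ i, ∑ j, P i j • xs j = xs i)
    (νs : Fin m → EuclideanSpace ℝ (Fin n))
    (hkkt : ∀ i, ∃ g : EuclideanSpace ℝ (Fin n),
      (∀ v ∈ 𝒳, 0 ≤ ⟪g, xs i - v⟫) ∧
      ∀ v, f i v ≥ f i (xs i) + ⟪-νs i + (∑ j, P i j • νs j) - g, v - xs i⟫)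
    (x : Fin m → EuclideanSpace ℝ (Fin n)) (hx : ∀ i, x i ∈ 𝒳) :
    (∑ i, f i (xs i)) - ∑ i, f i (x i) ≤
      ∑ i, ⟪νs i, x i - ∑ j, P i j • x j⟫ := by
  choose g hg1 hg2 using hkkt
  have key : ∀ i, f i (xs i) - f i (x i) ≤ ⟪νs i - ∑ j, P i j • νs j, x i - xs i⟫ := by
    intro i
    have h2 := hg2 i (x i)
    have h1 := hg1 i (x i) (hx i)
    have expand : ⟪-νs i + (∑ j, P i j • νs j) - g i, x i - xs i⟫
        = -⟪νs i - ∑ j, P i j • νs j, x i - xs i⟫ + ⟪g i, xs i - x i⟫ := by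
      simp only [inner_sub_left, inner_add_left, inner_neg_left, inner_sub_right]
      ring
    rw [expand] at h2
    linarith
  have hsum : (∑ i, f i (xs i)) - ∑ i, f i (x i)
      ≤ ∑ i, ⟪νs i - ∑ j, P i j • νs j, x i - xs i⟫ := by
    rw [← Finset.sum_sub_distrib]
    exact Finset.sum_le_sum fun i _ => key i
  refine hsum.trans_eq ?_
  have id1 : ∀ i, ⟪νs i - ∑ j, P i j • νs j, x i - xs i⟫
      = ⟪νs i, x i - xs i⟫ - ∑ j, P i j * ⟪νs j, x i - xs i⟫ := by
    intro i
    rw [inner_sub_left, sum_inner]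
    congr 1
    exact Finset.sum_congr rfl fun j _ => real_inner_smul_left _ _ _
  have id2 : ∑ i, ∑ j, P i j * ⟪νs j, x i - xs i⟫
      = ∑ j, ⟪νs j, (∑ i, P j i • x i) - xs j⟫ := by
    rw [Finset.sum_comm]
    refine Finset.sum_congr rfl fun j _ => ?_
    have hsub : (∑ i, P j i • x i) - xs j = ∑ i, P i j • (x i - xs i) := by
      rw [← hcons j, ← Finset.sum_sub_distrib]
      refine Finset.sum_congr rfl fun i _ => ?_
      rw [smul_sub, hPsym.apply i j]
    rw [hsub, inner_sum]
    exact Finset.sum_congr rfl fun i _ => (real_inner_smul_right _ _ _).symm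
  calc ∑ i, ⟪νs i - ∑ j, P i j • νs j, x i - xs i⟫
      = ∑ i, ⟪νs i, x i - xs i⟫ - ∑ i, ∑ j, P i j * ⟪νs j, x i - xs i⟫ := by
        simp [id1, Finset.sum_sub_distrib]
    _ = ∑ i, (⟪νs i, x i - xs i⟫ - ⟪νs i, (∑ j, P i j • x j) - xs i⟫) := by
        rw [id2, ← Finset.sum_sub_distrib]
    _ = ∑ i, ⟪νs i, x i - ∑ j, P i j • x j⟫ := by
        refine Finset.sum_congr rfl fun i _ => ?_
        simp only [inner_sub_right]
        ring
end
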